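/- For all positive integers n and k, c_n^*(k) = ∑_{d ∣ n, rad(n) ∣ d} c_d(k), where the sum runs over the divisors d of n divisible by rad(n), c_d(k) is the classical Ramanujan sum and c_n^*(k) is the unitary Ramanujan sum. -/

import Mathlib

/-! Group the `j ∈ [1, n]` by `d = n / gcd(j, n)`. Those with a given `d` are the `j = t · (n / d)`
with `t ∈ [1, d]` coprime to `d`, so they contribute exactly `c_d(k)`. On the other hand
`(j, n)_* = 1` means that no full prime power `p ^ v_p(n)` of `n` divides `j`, i.e. that every
prime factor of `n` divides `n / gcd(j, n) = d`, i.e. that `rad n ∣ d`. -/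

open Complex Finset

/-- The unitary gcd `(j,n)_*`: the largest `d` with `d ∣ j`, `d ∣ n` and `gcd(d, n/d) = 1`. -/
def ugcd (j n : ℕ) : ℕ :=
  Nat.findGreatest (fun d => d ∣ j ∧ d ∣ n ∧ Nat.gcd d (n / d) = 1) n

/-- The classical Ramanujan sum `c_n(k) = ∑_{1 ≤ j ≤ n, gcd(j,n) = 1} exp(2πijk/n)`. -/
noncomputable def ramanujanSum (n k : ℕ) : ℂ :=
  ∑ j ∈ (Finset.Icc 1 n).filter (fun j => Nat.gcd j n = 1),
    Complex.exp (2 * Real.pi * Complex.I * j * k / n)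

/-- The unitary Ramanujan sum `c_n^*(k) = ∑_{1 ≤ j ≤ n, (j,n)_* = 1} exp(2πijk/n)`. -/
noncomputable def unitaryRamanujanSum (n k : ℕ) : ℂ :=
  ∑ j ∈ (Finset.Icc 1 n).filter (fun j => ugcd j n = 1),
    Complex.exp (2 * Real.pi * Complex.I * j * k / n)

/-- The squarefree kernel `rad(n) = ∏_{p ∣ n} p`. -/
def rad (n : ℕ) : ℕ := ∏ p ∈ n.primeFactors, p

lemma rad_dvd_iff {n m : ℕ} : rad n ∣ m ↔ ∀ p ∈ n.primeFactors, p ∣ m :=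
  ⟨fun h _ hp => (Finset.dvd_prod_of_mem _ hp).trans h,
   fun h => Finset.prod_primes_dvd m (fun _ hp => (Nat.prime_of_mem_primeFactors hp).prime) h⟩

lemma Nat.ordProj_dvd_iff_not_dvd_div {p n g : ℕ} (hp : p.Prime) (hn : n ≠ 0) (hg : g ∣ n) :
    p ^ n.factorization p ∣ g ↔ ¬ p ∣ n / g := by
  have hg0 : g ≠ 0 := ne_zero_of_dvd_ne_zero hn hg
  have hle : g.factorization p ≤ n.factorization p :=
    (Nat.factorization_le_iff_dvd hg0 hn).mpr hg p
  rw [hp.pow_dvd_iff_le_factorization hg0,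
    hp.dvd_iff_one_le_factorization (Nat.div_ne_zero_iff_of_dvd hg |>.mpr ⟨hn, hg0⟩),
    Nat.factorization_div hg, Finsupp.tsub_apply]
  omega

lemma Nat.ordProj_dvd_of_coprime_div {p n e : ℕ} (hp : p.Prime) (hn : n ≠ 0) (he : e ∣ n)
    (hcop : Nat.Coprime e (n / e)) (hpe : p ∣ e) : p ^ n.factorization p ∣ e :=
  (Nat.ordProj_dvd_iff_not_dvd_div hp hn he).mpr fun hp_div =>
    hp.ne_one (Nat.eq_one_of_dvd_coprimes hcop hpe hp_div)

lemma ugcd_eq_one_iff {j n : ℕ} (hn : n ≠ 0) :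
    ugcd j n = 1 ↔ ∀ p ∈ n.primeFactors, ¬ p ^ n.factorization p ∣ j := by
  rw [ugcd, Nat.findGreatest_eq_iff]
  constructor
  · rintro ⟨-, -, hmax⟩ p hp hpow
    have hp' := Nat.prime_of_mem_primeFactors hp
    have hv : n.factorization p ≠ 0 :=
      (hp'.factorization_pos_of_dvd hn (Nat.dvd_of_mem_primeFactors hp)).ne'
    exact hmax (Nat.one_lt_pow hv hp'.one_lt) (Nat.le_of_dvd (by omega) (Nat.ordProj_dvd n p))
      ⟨hpow, Nat.ordProj_dvd n p, (Nat.coprime_ordCompl hp' hn).pow_left _⟩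
  · refine fun h => ⟨by omega, fun _ => ⟨one_dvd _, one_dvd _, Nat.gcd_one_left _⟩, ?_⟩
    rintro e he1 - ⟨hej, hen, hcop⟩
    obtain ⟨p, hp, hpe⟩ := Nat.exists_prime_and_dvd he1.ne'
    exact h p (Nat.mem_primeFactors.mpr ⟨hp, hpe.trans hen, hn⟩)
      ((Nat.ordProj_dvd_of_coprime_div hp hn hen hcop hpe).trans hej)

lemma ugcd_eq_one_iff_rad_dvd {j n : ℕ} (hn : n ≠ 0) :
    ugcd j n = 1 ↔ rad n ∣ n / Nat.gcd j n := by
  rw [ugcd_eq_one_iff hn, rad_dvd_iff]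
  refine forall₂_congr fun p hp => ?_
  have hdvd_gcd : p ^ n.factorization p ∣ j ↔ p ^ n.factorization p ∣ Nat.gcd j n := by
    rw [Nat.dvd_gcd_iff, and_iff_left (Nat.ordProj_dvd n p)]
  rw [hdvd_gcd, Nat.ordProj_dvd_iff_not_dvd_div (Nat.prime_of_mem_primeFactors hp) hn
    (Nat.gcd_dvd_right j n), not_not]

lemma ramanujanSum_eq_sum_gcd_eq {n d : ℕ} (hn : n ≠ 0) (hd : d ∣ n) (k : ℕ) :
    ramanujanSum d k = ∑ j ∈ (Icc 1 n).filter (fun j => Nat.gcd j n = n / d),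
      Complex.exp (2 * Real.pi * Complex.I * j * k / n) := by
  obtain ⟨m, rfl⟩ := hd
  have hd0 : d ≠ 0 := left_ne_zero_of_mul hn
  have hm : 0 < m := Nat.pos_of_ne_zero (right_ne_zero_of_mul hn)
  rw [ramanujanSum, Nat.mul_div_cancel_left m (Nat.pos_of_ne_zero hd0)]
  refine sum_nbij' (· * m) (· / m) (fun t ht => ?_) (fun j hj => ?_) (fun t _ => ?_)
    (fun j hj => ?_) (fun t _ => ?_)
  · simp only [mem_filter, mem_Icc] at ht ⊢
    refine ⟨⟨Nat.mul_pos ht.1.1 hm, Nat.mul_le_mul_right m ht.1.2⟩, ?_⟩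
    rw [Nat.gcd_mul_right, ht.2, one_mul]
  · simp only [mem_filter, mem_Icc] at hj ⊢
    obtain ⟨t, rfl⟩ : m ∣ j := hj.2 ▸ Nat.gcd_dvd_left j (d * m)
    rw [mul_comm m t, Nat.gcd_mul_right] at hj
    rw [Nat.mul_div_cancel_left t hm]
    exact ⟨⟨Nat.pos_of_ne_zero (by rintro rfl; simp at hj), Nat.le_of_mul_le_mul_right hj.1.2 hm⟩,
      Nat.eq_of_mul_eq_mul_right hm (by rw [hj.2, one_mul])⟩
  · exact Nat.mul_div_cancel t hm
  · simp only [mem_filter, mem_Icc] at hj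
    exact Nat.div_mul_cancel (hj.2 ▸ Nat.gcd_dvd_left j (d * m))
  · have hm' : (m : ℂ) ≠ 0 := Nat.cast_ne_zero.mpr hm.ne'
    push_cast
    congr 1
    field_simp

theorem stmt9_general (n k : ℕ) :
    unitaryRamanujanSum n k =
      ∑ d ∈ n.divisors.filter (fun d => rad n ∣ d), ramanujanSum d k := by
  rcases Nat.eq_zero_or_pos n with rfl | hn
  · simp [unitaryRamanujanSum]
  have hn0 := hn.ne'
  rw [unitaryRamanujanSum, ← sum_fiberwise_of_maps_to (g := fun j => n / Nat.gcd j n)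
    (t := n.divisors.filter (fun d => rad n ∣ d))]
  · refine sum_congr rfl fun d hd => ?_
    rw [mem_filter, Nat.mem_divisors] at hd
    rw [ramanujanSum_eq_sum_gcd_eq hn0 hd.1.1, filter_filter]
    refine sum_congr (filter_congr fun j _ => ?_) fun _ _ => rfl
    rw [← Nat.div_eq_iff_eq_of_dvd_dvd hn0 (Nat.gcd_dvd_right j n) (Nat.div_dvd_of_dvd hd.1.1),
      Nat.div_div_self hd.1.1 hn0, ugcd_eq_one_iff_rad_dvd hn0]
    exact and_iff_right_of_imp fun h : n / j.gcd n = d => h ▸ hd.2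
  · intro j hj
    rw [mem_filter] at hj ⊢
    exact ⟨Nat.mem_divisors.mpr ⟨Nat.div_dvd_of_dvd (Nat.gcd_dvd_right j n), hn0⟩,
      (ugcd_eq_one_iff_rad_dvd hn0).mp hj.2⟩

theorem stmt9 (n k : ℕ) (hn : 1 ≤ n) (hk : 1 ≤ k) :
    unitaryRamanujanSum n k =
      ∑ d ∈ n.divisors.filter (fun d => rad n ∣ d), ramanujanSum d k :=
  stmt9_general n k
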